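/- arXiv:1712.03899 — 9 statements merged into one kernel-verified Lean document; each statement's English description precedes it below -/
import Mathlib

section
/- The Hurewicz property is preserved by countable unions: if X = ⋃_{n∈ω} X_n where each subspace X_n has the Hurewicz property, then X has the Hurewicz property. -/
open Set Filter

def Hurewicz (X : Type*) [TopologicalSpace X] : Prop :=
  ∀ U : ℕ → Set (Set X),
    (∀ n, (∀ u ∈ U n, IsOpen u) ∧ ⋃₀ U n = Set.univ) →
    ∃ V : ℕ → Set (Set X),
      (∀ n, V n ⊆ U n ∧ (V n).Finite) ∧
      ∀ x : X, ∀ᶠ n in atTop, x ∈ ⋃₀ V n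

def Menger (X : Type*) [TopologicalSpace X] : Prop :=
  ∀ U : ℕ → Set (Set X),
    (∀ n, (∀ u ∈ U n, IsOpen u) ∧ ⋃₀ U n = Set.univ) →
    ∃ V : ℕ → Set (Set X),
      (∀ n, V n ⊆ U n ∧ (V n).Finite) ∧
      (⋃ n, ⋃₀ V n) = Set.univ

theorem hurewicz_countable_union (X : Type*) [TopologicalSpace X] (A : ℕ → Set X)
    (hcov : ⋃ n, A n = Set.univ) (h : ∀ n, Hurewicz (A n)) : Hurewicz X := by
  intro U hU
  -- For each k, pull back the covers to the subspace A k
  have key : ∀ k : ℕ, ∃ W : ℕ → Set (Set X),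
      (∀ n, W n ⊆ U n ∧ (W n).Finite) ∧
      ∀ x : X, x ∈ A k → ∀ᶠ n in atTop, x ∈ ⋃₀ W n := by
    intro k
    set f : Set X → Set (A k) := fun u => (Subtype.val ⁻¹' u) with hf
    have hcover : ∀ n, (∀ u ∈ f '' (U n), IsOpen u) ∧ ⋃₀ (f '' (U n)) = Set.univ := by
      intro n
      constructor
      · rintro u ⟨v, hv, rfl⟩
        exact ((hU n).1 v hv).preimage continuous_subtype_val
      · ext x
        simp only [mem_univ, iff_true, mem_sUnion]
        have : (x : X) ∈ ⋃₀ U n := by rw [(hU n).2]; trivial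
        obtain ⟨u, hu, hxu⟩ := this
        exact ⟨f u, ⟨u, hu, rfl⟩, hxu⟩
    obtain ⟨V, hVsub, hVcov⟩ := h k (fun n => f '' (U n)) hcover
    -- for each n, find a finite W n ⊆ U n with f '' (W n) = V n
    have hW : ∀ n, ∃ W ⊆ U n, W.Finite ∧ f '' W = V n := by
      intro n
      have := (Set.exists_subset_image_finite_and (f := f) (s := U n)
        (p := fun t => t = V n)).mp ⟨V n, (hVsub n).1, (hVsub n).2, rfl⟩
      obtain ⟨t, ht, htf, hteq⟩ := this
      exact ⟨t, ht, htf, hteq⟩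
    choose W hWsub hWfin hWeq using hW
    refine ⟨W, fun n => ⟨hWsub n, hWfin n⟩, ?_⟩
    intro x hx
    filter_upwards [hVcov ⟨x, hx⟩] with n hn
    obtain ⟨v, hv, hxv⟩ := hn
    rw [← hWeq n] at hv
    obtain ⟨u, hu, rfl⟩ := hv
    exact ⟨u, hu, hxv⟩
  choose W hWsub hWcov using key
  refine ⟨fun n => ⋃ k ∈ Finset.range (n + 1), W k n, ?_, ?_⟩
  · intro n
    constructor
    · intro u hu
      simp only [mem_iUnion] at hu
      obtain ⟨k, _, hk⟩ := hu
      exact (hWsub k n).1 hk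
    · exact Set.Finite.biUnion (Finset.range (n + 1)).finite_toSet
        (fun k _ => (hWsub k n).2)
  · intro x
    have : x ∈ ⋃ n, A n := hcov ▸ mem_univ x
    obtain ⟨k, hk⟩ := by simpa using this
    have := hWcov k x hk
    rw [eventually_atTop] at this ⊢
    obtain ⟨N, hN⟩ := this
    refine ⟨max N k, fun n hn => ?_⟩
    obtain ⟨u, hu, hxu⟩ := hN n (le_trans (le_max_left _ _) hn)
    refine ⟨u, ?_, hxu⟩
    simp only [mem_iUnion]
    exact ⟨k, Finset.mem_range.mpr (Nat.lt_succ_of_le (le_trans (le_max_right _ _) hn)), hu⟩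
end

section
/- Every F_σ subspace of a space with the Hurewicz property has the Hurewicz property. -/
/-!
The Hurewicz property of a subspace `s ⊆ X` only needs to be checked on covers of `s` by open sets
of `X`, since open sets of `s` are traces of open sets of `X`. A closed subset `F` inherits the
property from `X`: adjoin the open set `Fᶜ` to each cover of `F` to obtain covers of `X`. A
countable union `⋃ k, s k` is handled diagonally: at stage `n` take the union of the finite
subfamilies chosen for `s 0, …, s n`.
-/

open Set Filter

section

variable {X : Type*} [TopologicalSpace X]

def IsHurewicz (s : Set X) : Prop :=
  ∀ U : ℕ → Set (Set X),
    (∀ n, (∀ u ∈ U n, IsOpen u) ∧ s ⊆ ⋃₀ U n) →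
    ∃ V : ℕ → Set (Set X),
      (∀ n, V n ⊆ U n ∧ (V n).Finite) ∧
      ∀ x ∈ s, ∀ᶠ n in atTop, x ∈ ⋃₀ V n

theorem Hurewicz.isHurewicz_of_isClosed (h : Hurewicz X) {F : Set X} (hF : IsClosed F) :
    IsHurewicz F := by
  intro U hU
  have hcover : ∀ n, (∀ w ∈ insert Fᶜ (U n), IsOpen w) ∧ ⋃₀ insert Fᶜ (U n) = univ := by
    refine fun n => ⟨?_, ?_⟩
    · rintro w (rfl | hw)
      exacts [hF.isOpen_compl, (hU n).1 w hw]
    · refine eq_univ_of_forall fun x => ?_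
      by_cases hx : x ∈ F
      · obtain ⟨u, hu, hxu⟩ := (hU n).2 hx
        exact ⟨u, mem_insert_of_mem _ hu, hxu⟩
      · exact ⟨Fᶜ, mem_insert _ _, hx⟩
  obtain ⟨V, hVsub, hVcov⟩ := h _ hcover
  refine ⟨fun n => V n \ {Fᶜ}, fun n => ⟨?_, (hVsub n).2.sdiff⟩, fun x hx => ?_⟩
  · rintro w ⟨hw, hne⟩
    exact ((hVsub n).1 hw).resolve_left hne
  · filter_upwards [hVcov x] with n ⟨w, hw, hxw⟩
    exact ⟨w, ⟨hw, fun hwF => (hwF ▸ hxw) hx⟩, hxw⟩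

theorem IsHurewicz.iUnion {s : ℕ → Set X} (hs : ∀ k, IsHurewicz (s k)) :
    IsHurewicz (⋃ k, s k) := by
  intro U hU
  choose V hVsub hVcov using
    fun k => hs k U fun n => ⟨(hU n).1, (subset_iUnion s k).trans (hU n).2⟩
  refine ⟨fun n => ⋃ k ≤ n, V k n, fun n => ⟨iUnion₂_subset fun k _ => (hVsub k n).1, ?_⟩, ?_⟩
  · exact (finite_le_nat n).biUnion fun k _ => (hVsub k n).2
  · intro x hx
    obtain ⟨k, hxk⟩ := mem_iUnion.1 hx
    filter_upwards [hVcov k x hxk, eventually_ge_atTop k] with n ⟨w, hw, hxw⟩ hkn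
    exact ⟨w, mem_biUnion hkn hw, hxw⟩

theorem IsHurewicz.hurewicz_subtype {s : Set X} (hs : IsHurewicz s) : Hurewicz s := by
  intro U hU
  let U' : ℕ → Set (Set X) := fun n => {v | IsOpen v ∧ (↑) ⁻¹' v ∈ U n}
  have hcover : ∀ n, (∀ v ∈ U' n, IsOpen v) ∧ s ⊆ ⋃₀ U' n := by
    refine fun n => ⟨fun v hv => hv.1, fun x hx => ?_⟩
    obtain ⟨u, hu, hxu⟩ := (hU n).2.symm ▸ mem_univ (⟨x, hx⟩ : s)
    obtain ⟨v, hv, rfl⟩ := Topology.IsInducing.subtypeVal.isOpen_iff.1 ((hU n).1 u hu)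
    exact ⟨v, ⟨hv, hu⟩, hxu⟩
  obtain ⟨V, hVsub, hVcov⟩ := hs U' hcover
  refine ⟨fun n => preimage (↑) '' V n, fun n => ⟨?_, (hVsub n).2.image _⟩, fun x => ?_⟩
  · rintro _ ⟨v, hv, rfl⟩
    exact ((hVsub n).1 hv).2
  · filter_upwards [hVcov x x.2] with n ⟨v, hv, hxv⟩
    exact ⟨_, mem_image_of_mem _ hv, hxv⟩

end

theorem hurewicz_Fsigma_subspace (X : Type*) [TopologicalSpace X] (h : Hurewicz X)
    (S : Set X) (C : ℕ → Set X) (hC : ∀ n, IsClosed (C n)) (hS : S = ⋃ n, C n) :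
    Hurewicz S := by
  subst hS
  exact (IsHurewicz.iUnion fun n => h.isHurewicz_of_isClosed (hC n)).hurewicz_subtype
end

section
/- If X ⊆ P(ω) (identified with Cantor space 2^ω) has the Hurewicz property, then for every continuous function f : X → ω^ω the image f[X] is bounded with respect to eventual dominance ≤*. -/
open Set Filter

theorem hurewicz_image_bounded (X : Set (ℕ → Bool)) (h : Hurewicz X)
    (f : X → (ℕ → ℕ)) (hf : Continuous f) :
    ∃ b : ℕ → ℕ, ∀ x : X, ∀ᶠ n in Filter.cofinite, f x n ≤ b n := by
  classical
  have hcont : ∀ n, Continuous fun x : X => f x n := fun n => (continuous_apply n).comp hf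
  have hcov : ∀ n, (∀ u ∈ Set.range (fun k : ℕ => {x : X | f x n < k}), IsOpen u) ∧
      ⋃₀ Set.range (fun k : ℕ => {x : X | f x n < k}) = Set.univ := by
    intro n
    constructor
    · rintro u ⟨k, rfl⟩
      exact (hcont n).isOpen_preimage {m | m < k} (isOpen_discrete _)
    · ext x
      simp only [Set.mem_sUnion, Set.mem_univ, iff_true]
      exact ⟨_, ⟨f x n + 1, rfl⟩, Nat.lt_succ_self _⟩
  obtain ⟨V, hV1, hV2⟩ := h (fun n => Set.range (fun k : ℕ => {x : X | f x n < k})) hcov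
  choose kfun hkfun using fun n (v : Set X) (hv : v ∈ V n) => (hV1 n).1 hv
  refine ⟨fun n => ((hV1 n).2.toFinset.attach).sup
    (fun v => kfun n v.1 ((Set.Finite.mem_toFinset _).1 v.2)), fun x => ?_⟩
  rw [Nat.cofinite_eq_atTop]
  filter_upwards [hV2 x] with n hn
  obtain ⟨v, hv, hxv⟩ := hn
  have hle : kfun n v hv ≤ ((hV1 n).2.toFinset.attach).sup
      (fun v => kfun n v.1 ((Set.Finite.mem_toFinset _).1 v.2)) :=
    Finset.le_sup (f := fun v : {w // w ∈ (hV1 n).2.toFinset} =>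
        kfun n v.1 ((Set.Finite.mem_toFinset _).1 v.2))
      (b := ⟨v, (Set.Finite.mem_toFinset _).2 hv⟩) (Finset.mem_attach _ _)
  have hx : f x n < kfun n v hv := by
    have := hkfun n v hv
    rw [← this] at hxv
    exact hxv
  exact le_trans (Nat.le_of_lt hx) hle
end

section
/- If every continuous image of a zero-dimensional separable metrizable space X in ω^ω is bounded with respect to ≤*, then X has the Hurewicz property. -/
open Set Filter

/-- Auxiliary: countable clopen refinement of an open cover. -/
lemma exists_clopen_refinement {X : Type*} [TopologicalSpace X]
    [SecondCountableTopology X] [Nonempty X]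
    (hzero : TopologicalSpace.IsTopologicalBasis {s : Set X | IsClopen s})
    (U : Set (Set X)) (hopen : ∀ u ∈ U, IsOpen u) (hcov : ⋃₀ U = Set.univ) :
    ∃ C : ℕ → Set X, ∃ u : ℕ → Set X,
      (∀ k, IsClopen (C k)) ∧ (∀ k, u k ∈ U ∧ C k ⊆ u k) ∧ (⋃ k, C k) = Set.univ := by
  set S : Set (Set X) := {s | IsClopen s ∧ ∃ u ∈ U, s ⊆ u} with hS
  have hSopen : ∀ s ∈ S, IsOpen s := fun s hs => hs.1.isOpen
  have hScov : ⋃₀ S = Set.univ := by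
    apply eq_univ_of_forall
    intro x
    have hx : x ∈ ⋃₀ U := hcov ▸ mem_univ x
    obtain ⟨u, huU, hxu⟩ := hx
    obtain ⟨s, hs, hxs, hsu⟩ := hzero.exists_subset_of_mem_open hxu (hopen u huU)
    exact ⟨s, ⟨hs, u, huU, hsu⟩, hxs⟩
  obtain ⟨T, hTc, hTS, hTcov⟩ := TopologicalSpace.isOpen_sUnion_countable S hSopen
  rw [hScov] at hTcov
  have hTne : T.Nonempty := by
    rcases T.eq_empty_or_nonempty with h | h
    · exfalso
      rw [h, sUnion_empty] at hTcov
      exact absurd (hTcov ▸ mem_univ (Classical.arbitrary X)) (notMem_empty _)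
    · exact h
  obtain ⟨C, hC⟩ := hTc.exists_eq_range hTne
  have hCk : ∀ k, C k ∈ S := fun k => hTS (hC ▸ mem_range_self k)
  refine ⟨C, fun k => (hCk k).2.choose, fun k => (hCk k).1,
    fun k => ⟨(hCk k).2.choose_spec.1, (hCk k).2.choose_spec.2⟩, ?_⟩
  rw [← sUnion_range, ← hC, hTcov]

theorem bounded_images_implies_hurewicz (X : Type*) [TopologicalSpace X]
    [TopologicalSpace.MetrizableSpace X] [TopologicalSpace.SeparableSpace X]
    (hzero : TopologicalSpace.IsTopologicalBasis {s : Set X | IsClopen s})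
    (hb : ∀ f : X → (ℕ → ℕ), Continuous f →
      ∃ b : ℕ → ℕ, ∀ x : X, ∀ᶠ n in Filter.cofinite, f x n ≤ b n) :
    Hurewicz X := by
  intro U hU
  rcases isEmpty_or_nonempty X with hX | hX
  · exact ⟨fun _ => ∅, fun n => ⟨empty_subset _, finite_empty⟩, fun x => (IsEmpty.false x).elim⟩
  letI : MetricSpace X := TopologicalSpace.metrizableSpaceMetric X
  haveI : SecondCountableTopology X := UniformSpace.secondCountable_of_separable X
  choose C usel hclopen husel hcov using
    fun n => exists_clopen_refinement hzero (U n) (hU n).1 (hU n).2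
  -- the least-index function
  have hne : ∀ (x : X) (n : ℕ), {k | x ∈ C n k}.Nonempty := by
    intro x n
    have : x ∈ ⋃ k, C n k := (hcov n) ▸ mem_univ x
    obtain ⟨k, hk⟩ := mem_iUnion.mp this
    exact ⟨k, hk⟩
  set g : X → ℕ → ℕ := fun x n => sInf {k | x ∈ C n k} with hg
  have hmem : ∀ x n, x ∈ C n (g x n) := fun x n => Nat.sInf_mem (hne x n)
  have hfiber : ∀ n k, {x | g x n = k} = C n k \ ⋃ j ∈ Finset.range k, C n j := by
    intro n k
    ext x
    constructor
    · rintro (h : sInf {k | x ∈ C n k} = k)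
      refine ⟨h ▸ hmem x n, ?_⟩
      intro hxm
      obtain ⟨j, hj, hxj⟩ := by simpa using hxm
      have : sInf {k | x ∈ C n k} ≤ j := Nat.sInf_le hxj
      omega
    · rintro ⟨hxk, hxnot⟩
      have h1 : sInf {k | x ∈ C n k} ≤ k := Nat.sInf_le hxk
      have h2 : ¬ sInf {k | x ∈ C n k} < k := by
        intro hlt
        exact hxnot (by simpa using ⟨sInf {k | x ∈ C n k}, hlt, hmem x n⟩)
      show sInf {k | x ∈ C n k} = k
      omega
  have hfiberClopen : ∀ n k, IsClopen {x | g x n = k} := by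
    intro n k
    rw [hfiber n k]
    exact (hclopen n k).diff
      ((Finset.range k).finite_toSet.isClopen_biUnion (fun j _ => hclopen n j))
  have hgcont : Continuous g := by
    apply continuous_pi
    intro n
    rw [continuous_def]
    intro s _
    have : (fun x => g x n) ⁻¹' s = ⋃ k ∈ s, {x | g x n = k} := by
      ext x; simp
    rw [this]
    exact isOpen_biUnion fun k _ => (hfiberClopen n k).isOpen
  obtain ⟨b, hbx⟩ := hb g hgcont
  refine ⟨fun n => usel n '' (Set.Iic (b n)), fun n => ⟨?_, (Set.finite_Iic (b n)).image _⟩, ?_⟩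
  · rintro v ⟨k, _, rfl⟩
    exact (husel n k).1
  · intro x
    rw [← Nat.cofinite_eq_atTop]
    filter_upwards [hbx x] with n hn
    exact ⟨usel n (g x n), ⟨g x n, hn, rfl⟩, (husel n (g x n)).2 (hmem x n)⟩
end

section
/- Let Y ⊆ P(ω) (identified with 2^ω) be a Hurewicz space and Q ⊆ P(ω) countable. Then for every G_δ-subset O of P(ω)² containing Q × Y there exists a G_δ-subset R ⊇ Q of P(ω) such that R × Y ⊆ O. -/
open Set Filter

theorem covering_Gdelta (Y Q : Set (ℕ → Bool)) (hY : Hurewicz Y) (hQ : Q.Countable)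
    (O : Set ((ℕ → Bool) × (ℕ → Bool))) (hO : IsGδ O) (hsub : Q ×ˢ Y ⊆ O) :
    ∃ R : Set (ℕ → Bool), IsGδ R ∧ Q ⊆ R ∧ R ×ˢ Y ⊆ O := by
  obtain ⟨W, hWopen, hWeq⟩ := hO.eq_iInter_nat
  rcases Q.eq_empty_or_nonempty with rfl | hQne
  · exact ⟨∅, isOpen_empty.isGδ, subset_rfl, by simp⟩
  obtain ⟨q, hqQR⟩ := hQ.exists_eq_range hQne
  have hqQ : ∀ i, q i ∈ Q := fun i => hqQR ▸ mem_range_self i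
  -- the covers of Y (as a subtype)
  set 𝒰 : ℕ → Set (Set ↥Y) := fun n =>
    {v | ∃ V : Set (ℕ → Bool), IsOpen V ∧ v = Subtype.val ⁻¹' V ∧
      ∀ i ≤ n, ∃ U : Set (ℕ → Bool), IsOpen U ∧ q i ∈ U ∧ ∀ m ≤ n, U ×ˢ V ⊆ W m} with h𝒰
  have hcover : ∀ n, (∀ u ∈ 𝒰 n, IsOpen u) ∧ ⋃₀ 𝒰 n = Set.univ := by
    intro n
    constructor
    · rintro u ⟨V, hVo, rfl, -⟩
      exact hVo.preimage continuous_subtype_val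
    · apply eq_univ_of_forall
      intro z
      -- the finite intersection of the W m for m ≤ n
      set T : Set ((ℕ → Bool) × (ℕ → Bool)) := ⋂ m ∈ Finset.range (n+1), W m with hT
      have hTopen : IsOpen T := isOpen_biInter_finset fun m _ => hWopen m
      have hmemT : ∀ i, (q i, (z : (ℕ → Bool))) ∈ T := by
        intro i
        have : (q i, (z : (ℕ → Bool))) ∈ O := hsub ⟨hqQ i, z.2⟩
        rw [hWeq] at this
        exact mem_biInter fun m _ => mem_iInter.1 this m
      have hUV : ∀ i, ∃ U V' : Set (ℕ → Bool), IsOpen U ∧ IsOpen V' ∧ q i ∈ U ∧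
          (z : (ℕ → Bool)) ∈ V' ∧ U ×ˢ V' ⊆ T := by
        intro i
        obtain ⟨U, V', hUo, hVo, hqU, hzV, hsub'⟩ :=
          (isOpen_prod_iff.1 hTopen) (q i) (z : (ℕ → Bool)) (hmemT i)
        exact ⟨U, V', hUo, hVo, hqU, hzV, hsub'⟩
      choose Ui Vi hUio hVio hqUi hzVi hUVi using hUV
      set Vbig : Set (ℕ → Bool) := ⋂ i ∈ Finset.range (n+1), Vi i with hVbig
      refine ⟨Subtype.val ⁻¹' Vbig, ⟨Vbig, isOpen_biInter_finset fun i _ => hVio i, rfl, ?_⟩, ?_⟩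
      · intro i hi
        refine ⟨Ui i, hUio i, hqUi i, fun m hm => ?_⟩
        intro p hp
        have h1 : p.1 ∈ Ui i := hp.1
        have h2 : p.2 ∈ Vi i := by
          have := hp.2
          rw [hVbig] at this
          exact mem_iInter.1 (mem_iInter.1 this i) (Finset.mem_range.2 (Nat.lt_succ_of_le hi))
        have : p ∈ T := hUVi i ⟨h1, h2⟩
        rw [hT] at this
        exact mem_iInter.1 (mem_iInter.1 this m) (Finset.mem_range.2 (Nat.lt_succ_of_le hm))
      · exact mem_biInter fun i _ => hzVi i
  obtain ⟨𝒱, h𝒱, hev⟩ := hY 𝒰 hcover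
  -- choose open sets, totalized
  have key : ∀ n (v : Set ↥Y) (i : ℕ), ∃ U V : Set (ℕ → Bool), IsOpen U ∧ q i ∈ U ∧
      (v ∈ 𝒱 n → i ≤ n → (v = Subtype.val ⁻¹' V ∧ ∀ m ≤ n, U ×ˢ V ⊆ W m)) := by
    intro n v i
    by_cases h : v ∈ 𝒱 n ∧ i ≤ n
    · obtain ⟨V, hVo, hveq, hU⟩ := (h𝒱 n).1 h.1
      obtain ⟨U, hUo, hqU, hUsub⟩ := hU i h.2
      exact ⟨U, V, hUo, hqU, fun _ _ => ⟨hveq, hUsub⟩⟩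
    · exact ⟨univ, ∅, isOpen_univ, mem_univ _, fun h1 h2 => absurd ⟨h1, h2⟩ h⟩
  choose U V hUopen hqU hspec using key
  set S : ℕ → ℕ → Set (ℕ → Bool) := fun j n => ⋂ v ∈ 𝒱 n, U n v j with hS
  have hSopen : ∀ j n, IsOpen (S j n) := by
    intro j n
    exact Set.Finite.isOpen_biInter (h𝒱 n).2 fun v _ => hUopen n v j
  have hqS : ∀ j n, q j ∈ S j n := by
    intro j n
    exact mem_biInter fun v _ => hqU n v j
  refine ⟨⋂ N, ⋃ j, ⋃ n, ⋃ (_ : max N j ≤ n), S j n, ?_, ?_, ?_⟩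
  · refine IsGδ.iInter fun N => IsOpen.isGδ ?_
    exact isOpen_iUnion fun j => isOpen_iUnion fun n => isOpen_iUnion fun _ => hSopen j n
  · intro x hx
    rw [hqQR] at hx
    obtain ⟨j, rfl⟩ := hx
    refine mem_iInter.2 fun N => ?_
    exact mem_iUnion.2 ⟨j, mem_iUnion.2 ⟨max N j, mem_iUnion.2 ⟨le_refl _, hqS j _⟩⟩⟩
  · rintro ⟨x, y⟩ ⟨hx, hy⟩
    rw [hWeq]
    refine mem_iInter.2 fun m => ?_
    obtain ⟨K, hK⟩ := eventually_atTop.1 (hev ⟨y, hy⟩)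
    obtain ⟨j, hj⟩ := mem_iUnion.1 (mem_iInter.1 hx (max K m))
    obtain ⟨n, hn⟩ := mem_iUnion.1 hj
    obtain ⟨hNn, hxS⟩ := mem_iUnion.1 hn
    have hKn : K ≤ n := le_trans (le_trans (le_max_left _ _) (le_max_left _ _)) hNn
    have hmn : m ≤ n := le_trans (le_trans (le_max_right _ _) (le_max_left _ _)) hNn
    have hjn : j ≤ n := le_trans (le_max_right _ _) hNn
    obtain ⟨v, hv𝒱, hyv⟩ := hK n hKn
    obtain ⟨hveq, hUsub⟩ := hspec n v j hv𝒱 hjn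
    have hxU : x ∈ U n v j := mem_iInter.1 (mem_iInter.1 hxS v) hv𝒱
    have hyV : y ∈ V n v j := by
      rw [hveq] at hyv
      exact hyv
    exact hUsub m hmn ⟨hxU, hyV⟩
end

section
/- Suppose b > ω₁ (every family of ω₁ many functions in ω^ω is bounded with respect to ≤*). Let Y ⊆ P(ω) be a Hurewicz space and X ⊆ P(ω) be weakly concentrated. Then X × Y has the Menger property. -/
open Set Filter

def WeaklyConcentrated (X : Set (ℕ → Bool)) : Prop :=
  ∀ Q : Set (Set (ℕ → Bool)),
    (∀ q ∈ Q, q.Countable ∧ q ⊆ X) →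
    (∀ A : Set (ℕ → Bool), A.Countable → A ⊆ X → ∃ q ∈ Q, A ⊆ q) →
    ∀ R : Set (ℕ → Bool) → Set (ℕ → Bool),
      (∀ q ∈ Q, IsGδ (R q) ∧ q ⊆ R q) →
      ∃ Q₁ : Set (Set (ℕ → Bool)), Q₁ ⊆ Q ∧ Cardinal.mk Q₁ = Cardinal.aleph 1 ∧
        X ⊆ ⋃ q ∈ Q₁, R q

section Aux


/-- cylinder determined by a list of booleans -/
def Cyl (l : List Bool) : Set (ℕ → Bool) := {z | ∀ i < l.length, z i = l.getD i true}

lemma isClopen_Cyl (l : List Bool) : IsClopen (Cyl l) := by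
  have : Cyl l = ⋂ i ∈ Finset.range l.length, (fun z : ℕ → Bool => z i) ⁻¹' {l.getD i true} := by
    ext z; simp [Cyl]
  rw [this]
  refine ⟨isClosed_biInter fun i _ => ?_, isOpen_biInter_finset fun i _ => ?_⟩
  · exact (isClosed_discrete _).preimage (continuous_apply i)
  · exact (isOpen_discrete _).preimage (continuous_apply i)

lemma mem_Cyl_restrict (x : ℕ → Bool) (n : ℕ) :
    x ∈ Cyl ((List.range n).map x) := by
  intro i hi
  simp only [List.length_map, List.length_range] at hi
  simp [List.getD, List.getElem?_map, List.getElem?_range, hi]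

lemma Cyl_subset (U : Set (ℕ → Bool)) (hU : IsOpen U) (x : ℕ → Bool) (hx : x ∈ U) :
    ∃ l : List Bool, x ∈ Cyl l ∧ Cyl l ⊆ U := by
  have hnh : U ∈ nhds x := hU.mem_nhds hx
  rw [nhds_pi] at hnh
  rw [Filter.mem_pi] at hnh
  obtain ⟨I, hIfin, t, ht, hsub⟩ := hnh
  obtain ⟨N, hN⟩ := hIfin.bddAbove
  refine ⟨(List.range (N+1)).map x, mem_Cyl_restrict x (N+1), fun z hz => hsub ?_⟩
  intro i hi
  have hiN : i < N + 1 := Nat.lt_succ_of_le (hN hi)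
  have : z i = x i := by
    have := hz i (by simp [hiN])
    simpa [List.getD, List.getElem?_map, List.getElem?_range, hiN] using this
  rw [this]
  have := ht i
  rwa [nhds_discrete, Filter.mem_pure] at this

lemma boxes (X Y : Set (ℕ → Bool)) (U : ℕ → Set (Set ↥(X ×ˢ Y)))
    (hU : ∀ n, (∀ u ∈ U n, IsOpen u) ∧ ⋃₀ U n = univ)
    (hne : Nonempty ↥(X ×ˢ Y)) :
    ∃ (A B : ℕ → ℕ → Set (ℕ → Bool)) (u : ℕ → ℕ → Set ↥(X ×ˢ Y)),
      (∀ n k, IsOpen (A n k)) ∧ (∀ n k, IsClopen (B n k)) ∧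
      (∀ n k, u n k ∈ U n) ∧
      (∀ x ∈ X, ∀ y ∈ Y, ∀ n, ∃ k, x ∈ A n k ∧ y ∈ B n k) ∧
      (∀ n k (z : ↥(X ×ˢ Y)), z.1.1 ∈ A n k → z.1.2 ∈ B n k → z ∈ u n k) := by
  classical
  set P : ℕ → Set (List Bool × List Bool) := fun n =>
    {p | ∃ w ∈ U n, ∀ z : ↥(X ×ˢ Y), z.1.1 ∈ Cyl p.1 → z.1.2 ∈ Cyl p.2 → z ∈ w} with hP
  have hPcov : ∀ n (z : ↥(X ×ˢ Y)), ∃ p ∈ P n, z.1.1 ∈ Cyl p.1 ∧ z.1.2 ∈ Cyl p.2 := by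
    intro n z
    have hz : z ∈ ⋃₀ U n := by rw [(hU n).2]; trivial
    obtain ⟨w, hw, hzw⟩ := hz
    obtain ⟨W, hWopen, hWpre⟩ := isOpen_induced_iff.1 ((hU n).1 w hw)
    have hzW : (z : (ℕ → Bool) × (ℕ → Bool)) ∈ W := by
      rw [← hWpre] at hzw; exact hzw
    obtain ⟨U₁, V₁, hU₁, hV₁, hx₁, hy₁, hsub⟩ := isOpen_prod_iff.1 hWopen z.1.1 z.1.2 hzW
    obtain ⟨l₁, hxl₁, hl₁⟩ := Cyl_subset U₁ hU₁ z.1.1 hx₁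
    obtain ⟨l₂, hyl₂, hl₂⟩ := Cyl_subset V₁ hV₁ z.1.2 hy₁
    refine ⟨(l₁, l₂), ⟨w, hw, fun z' hz1 hz2 => ?_⟩, hxl₁, hyl₂⟩
    have : (z' : (ℕ → Bool) × (ℕ → Bool)) ∈ W := hsub ⟨hl₁ hz1, hl₂ hz2⟩
    rw [← hWpre]; exact this
  have hPne : ∀ n, (P n).Nonempty := fun n => by
    obtain ⟨p, hp, _⟩ := hPcov n hne.some; exact ⟨p, hp⟩
  have he : ∀ n, ∃ f : ℕ → List Bool × List Bool, P n = range f :=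
    fun n => (Set.to_countable (P n)).exists_eq_range (hPne n)
  choose e he using he
  have heP : ∀ n k, e n k ∈ P n := by intro n k; rw [he n]; exact mem_range_self k
  have hew : ∀ n k, ∃ w, w ∈ U n ∧
      ∀ z : ↥(X ×ˢ Y), z.1.1 ∈ Cyl (e n k).1 → z.1.2 ∈ Cyl (e n k).2 → z ∈ w := by
    intro n k; obtain ⟨w, hw, himp⟩ := heP n k; exact ⟨w, hw, himp⟩
  choose u huU himp using hew
  refine ⟨fun n k => Cyl (e n k).1, fun n k => Cyl (e n k).2, u,
    fun n k => (isClopen_Cyl _).isOpen, fun n k => isClopen_Cyl _, huU, ?_, himp⟩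
  intro x hx y hy n
  have hz : ((x, y) : (ℕ → Bool) × (ℕ → Bool)) ∈ X ×ˢ Y := ⟨hx, hy⟩
  obtain ⟨p, hp, h1, h2⟩ := hPcov n ⟨(x, y), hz⟩
  rw [he n] at hp
  obtain ⟨k, hk⟩ := hp
  subst hk
  exact ⟨k, h1, h2⟩

lemma key (X Y : Set (ℕ → Bool)) (hY : Hurewicz Y)
    (A B : ℕ → ℕ → Set (ℕ → Bool))
    (hA : ∀ n k, IsOpen (A n k)) (hB : ∀ n k, IsClopen (B n k))
    (hcov : ∀ x ∈ X, ∀ y ∈ Y, ∀ n, ∃ k, x ∈ A n k ∧ y ∈ B n k)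
    (q : Set (ℕ → Bool)) (hq : q.Countable) (hqX : q ⊆ X) :
    ∃ (R : Set (ℕ → Bool)) (m : ℕ → ℕ), IsGδ R ∧ q ⊆ R ∧
      ∀ x ∈ R, ∀ y ∈ Y, ∀ N : ℕ, ∃ n ≥ N, ∃ k ≤ m n, x ∈ A n k ∧ y ∈ B n k := by
  classical
  rcases q.eq_empty_or_nonempty with hqe | hqne
  · subst hqe
    refine ⟨∅, fun _ => 0, ?_, subset_rfl, fun x hx => absurd hx (notMem_empty x)⟩
    exact IsOpen.isGδ isOpen_empty
  obtain ⟨x, hxq⟩ := hq.exists_eq_range hqne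
  have hxX : ∀ i, x i ∈ X := fun i => hqX (hxq ▸ mem_range_self i)
  -- covers of Y
  set E : ∀ n, (ℕ → ℕ) → Set (ℕ → Bool) :=
    fun n s => ⋂ i ∈ Finset.range (n+1), B n (s i) with hE
  set W : ℕ → Set (Set ↥Y) := fun n =>
    {w | ∃ s : ℕ → ℕ, (∀ i ≤ n, x i ∈ A n (s i)) ∧ w = Subtype.val ⁻¹' (E n s)} with hW
  have hWopen : ∀ n, ∀ w ∈ W n, IsOpen w := by
    rintro n w ⟨s, _, rfl⟩
    exact (isOpen_biInter_finset fun i _ => (hB n (s i)).isOpen).preimage continuous_subtype_val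
  have hWcov : ∀ n, ⋃₀ W n = univ := by
    intro n
    rw [eq_univ_iff_forall]
    intro y
    have hsel : ∀ i, ∃ k, x i ∈ A n k ∧ (y : ℕ → Bool) ∈ B n k :=
      fun i => hcov (x i) (hxX i) y y.2 n
    choose s hs using hsel
    refine ⟨Subtype.val ⁻¹' (E n s), ⟨s, fun i _ => (hs i).1, rfl⟩, ?_⟩
    simp only [hE, mem_preimage, mem_iInter]
    exact fun i _ => (hs i).2
  obtain ⟨V, hV, hVev⟩ := hY W (fun n => ⟨hWopen n, hWcov n⟩)
  -- extract selection data
  have hsel : ∀ n (v : Set ↥Y), ∃ s : ℕ → ℕ,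
      v ∈ V n → ((∀ i ≤ n, x i ∈ A n (s i)) ∧ v = Subtype.val ⁻¹' (E n s)) := by
    intro n v
    by_cases hv : v ∈ V n
    · obtain ⟨s, h1, h2⟩ := (hV n).1 hv
      exact ⟨s, fun _ => ⟨h1, h2⟩⟩
    · exact ⟨fun _ => 0, fun h => absurd h hv⟩
  choose sv hsv using hsel
  set D : ℕ → Set (ℕ → Bool) := fun n => ⋃ v ∈ V n, E n (sv n v) with hD
  have hDclosed : ∀ n, IsClosed (D n) :=
    fun n => (hV n).2.isClosed_biUnion fun v _ =>
      isClosed_biInter fun i _ => (hB n _).isClosed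
  set m : ℕ → ℕ := fun n => (hV n).2.toFinset.sup
    (fun v => (Finset.range (n+1)).sup (sv n v)) with hm
  have hmle : ∀ n, ∀ v ∈ V n, ∀ i ≤ n, sv n v i ≤ m n := by
    intro n v hv i hi
    calc sv n v i ≤ (Finset.range (n+1)).sup (sv n v) :=
          Finset.le_sup (Finset.mem_range.2 (Nat.lt_succ_of_le hi))
      _ ≤ m n := Finset.le_sup (f := fun v => (Finset.range (n+1)).sup (sv n v)) ((hV n).2.mem_toFinset.2 hv)
  -- F2
  have hD2 : ∀ n, ∀ i ≤ n, ∀ y ∈ D n, ∃ k ≤ m n, x i ∈ A n k ∧ y ∈ B n k := by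
    intro n i hi y hy
    obtain ⟨v, hv, hyE⟩ := mem_iUnion₂.1 hy
    refine ⟨sv n v i, hmle n v hv i hi, ((hsv n v hv).1 i hi), ?_⟩
    exact mem_iInter₂.1 hyE i (Finset.mem_range.2 (Nat.lt_succ_of_le hi))
  -- F1
  have hD1 : ∀ y ∈ Y, ∃ M, ∀ n ≥ M, y ∈ D n := by
    intro y hy
    obtain ⟨M, hM⟩ := eventually_atTop.1 (hVev ⟨y, hy⟩)
    refine ⟨M, fun n hn => ?_⟩
    obtain ⟨v, hv, hyv⟩ := hM n hn
    have := (hsv n v hv).2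
    rw [this] at hyv
    exact mem_biUnion hv hyv
  set K : ℕ → Set (ℕ → Bool) := fun M => ⋂ n, ⋂ (_ : M ≤ n), D n with hK
  have hKcomp : ∀ M, IsCompact (K M) := fun M =>
    (isClosed_iInter fun n => isClosed_iInter fun _ => hDclosed n).isCompact
  have hKD : ∀ M n, M ≤ n → K M ⊆ D n := fun M n hn => iInter₂_subset n hn
  have hYK : ∀ y ∈ Y, ∃ M, y ∈ K M := by
    intro y hy
    obtain ⟨M, hM⟩ := hD1 y hy
    exact ⟨M, mem_iInter₂.2 hM⟩
  set O : ℕ → Set ((ℕ → Bool) × (ℕ → Bool)) := fun n =>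
    ⋃ k, ⋃ (_ : k ≤ m n), (A n k) ×ˢ (B n k) with hO
  have hOopen : ∀ n, IsOpen (O n) :=
    fun n => isOpen_iUnion fun k => isOpen_iUnion fun _ => (hA n k).prod (hB n k).isOpen
  set T : ℕ → ℕ → Set (ℕ → Bool) := fun n M => {x' | ∀ y ∈ K M, (x', y) ∈ O n} with hT
  have hTopen : ∀ n M, IsOpen (T n M) := by
    intro n M
    rw [isOpen_iff_forall_mem_open]
    intro x' hx'
    have hsub : {x'} ×ˢ K M ⊆ O n := by
      rintro ⟨a, b⟩ ⟨ha, hb⟩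
      rw [mem_singleton_iff] at ha
      subst ha
      exact hx' b hb
    obtain ⟨u, v, hu, hv, hsu, htv, huv⟩ :=
      generalized_tube_lemma isCompact_singleton (hKcomp M) (hOopen n) hsub
    refine ⟨u, fun x'' hx'' y hy => huv ⟨hx'', htv hy⟩, hu, hsu rfl⟩
  have hTq : ∀ i M N : ℕ, ∃ n ≥ N, x i ∈ T n M := by
    intro i M N
    refine ⟨max i (max M N), le_trans (le_max_right M N) (le_max_right _ _), ?_⟩
    intro y hy
    have hyD : y ∈ D (max i (max M N)) :=
      hKD M _ (le_trans (le_max_left M N) (le_max_right _ _)) hy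
    obtain ⟨k, hk, hxa, hyb⟩ := hD2 _ i (le_max_left _ _) y hyD
    exact mem_iUnion₂.2 ⟨k, hk, hxa, hyb⟩
  refine ⟨⋂ M, ⋂ N, ⋃ n, ⋃ (_ : N ≤ n), T n M, m, ?_, ?_, ?_⟩
  · exact IsGδ.iInter fun M => IsGδ.iInter fun N =>
      (isOpen_iUnion fun n => isOpen_iUnion fun _ => hTopen n M).isGδ
  · intro a ha
    obtain ⟨i, rfl⟩ : a ∈ range x := hxq ▸ ha
    refine mem_iInter.2 fun M => mem_iInter.2 fun N => ?_
    obtain ⟨n, hn, hT'⟩ := hTq i M N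
    exact mem_iUnion₂.2 ⟨n, hn, hT'⟩
  · intro x' hx' y hy N
    obtain ⟨M, hM⟩ := hYK y hy
    have := mem_iInter.1 (mem_iInter.1 hx' M) N
    obtain ⟨n, hn, hT'⟩ := mem_iUnion₂.1 this
    obtain ⟨k, hk, hmem⟩ := mem_iUnion₂.1 (hT' y hM)
    exact ⟨n, hn, k, hk, hmem.1, hmem.2⟩

end Aux

theorem weaklyConcentrated_prod_menger
    (hb : ∀ F : Set (ℕ → ℕ), Cardinal.mk F ≤ Cardinal.aleph 1 →
      ∃ b : ℕ → ℕ, ∀ f ∈ F, ∀ᶠ n in Filter.cofinite, f n ≤ b n)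
    (X Y : Set (ℕ → Bool)) (hY : Hurewicz Y) (hX : WeaklyConcentrated X) :
    Menger (X ×ˢ Y : Set ((ℕ → Bool) × (ℕ → Bool))) := by
  classical
  intro U hU
  by_cases hne : Nonempty ↥(X ×ˢ Y)
  swap
  · refine ⟨fun _ => ∅, fun n => ⟨empty_subset _, finite_empty⟩, ?_⟩
    exact eq_univ_of_forall fun z => absurd ⟨z⟩ hne
  obtain ⟨A, B, u, hA, hB, huU, hcov, himp⟩ := boxes X Y U hU hne
  have hkey : ∀ q : Set (ℕ → Bool), ∃ (R : Set (ℕ → Bool)) (m : ℕ → ℕ),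
      q.Countable → q ⊆ X → (IsGδ R ∧ q ⊆ R ∧
        ∀ x ∈ R, ∀ y ∈ Y, ∀ N : ℕ, ∃ n ≥ N, ∃ k ≤ m n, x ∈ A n k ∧ y ∈ B n k) := by
    intro q
    by_cases hq : q.Countable ∧ q ⊆ X
    · obtain ⟨R, m, h1, h2, h3⟩ := key X Y hY A B hA hB hcov q hq.1 hq.2
      exact ⟨R, m, fun _ _ => ⟨h1, h2, h3⟩⟩
    · refine ⟨∅, fun _ => 0, fun h1 h2 => absurd ⟨h1, h2⟩ hq⟩
  choose Rf mf hRf using hkey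
  obtain ⟨Q₁, hQ₁Q, hQ₁card, hXcov⟩ := hX {q | q.Countable ∧ q ⊆ X}
    (fun q hq => hq) (fun a hac hax => ⟨a, ⟨hac, hax⟩, subset_rfl⟩) Rf
    (fun q hq => ⟨(hRf q hq.1 hq.2).1, (hRf q hq.1 hq.2).2.1⟩)
  obtain ⟨g, hg⟩ := hb (mf '' Q₁) (le_of_le_of_eq Cardinal.mk_image_le hQ₁card)
  refine ⟨fun n => {w | ∃ k ≤ g n, w = u n k}, fun n => ⟨?_, ?_⟩, ?_⟩
  · rintro w ⟨k, hk, rfl⟩; exact huU n k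
  · have : {w | ∃ k ≤ g n, w = u n k} = (fun k => u n k) '' Iic (g n) := by
      ext w; simp [eq_comm, Iic]
    simp only []
    rw [this]
    exact (finite_Iic _).image _
  · apply eq_univ_of_forall
    intro z
    have hzX : z.1.1 ∈ X := z.2.1
    have hzY : z.1.2 ∈ Y := z.2.2
    obtain ⟨q, hq1, hzR⟩ := mem_iUnion₂.1 (hXcov hzX)
    have hq := hQ₁Q hq1
    have hprop := (hRf q hq.1 hq.2).2.2
    have hgb := hg (mf q) ⟨q, hq1, rfl⟩
    rw [Nat.cofinite_eq_atTop, eventually_atTop] at hgb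
    obtain ⟨N, hN⟩ := hgb
    obtain ⟨n, hnN, k, hk, hxA, hyB⟩ := hprop z.1.1 hzR z.1.2 hzY N
    exact mem_iUnion.2 ⟨n, ⟨u n k, ⟨k, le_trans hk (hN n hnN), rfl⟩, himp n k z hxA hyB⟩⟩
end

section
/- Every weakly concentrated λ-subset of P(ω) has cardinality at most ω₁. -/
open Set

/-- `X` is a λ-set: every countable subset of `X` is a relative `G_δ` in `X`. -/
def LambdaSet (X : Set (ℕ → Bool)) : Prop :=
  ∀ A : Set (ℕ → Bool), A.Countable → A ⊆ X →
    ∃ G : Set (ℕ → Bool), IsGδ G ∧ X ∩ G = A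

theorem weaklyConcentrated_lambdaSet_card (X : Set (ℕ → Bool))
    (h1 : WeaklyConcentrated X) (h2 : LambdaSet X) :
    Cardinal.mk X ≤ Cardinal.aleph 1 := by
  classical
  set Q : Set (Set (ℕ → Bool)) := {q | q.Countable ∧ q ⊆ X} with hQdef
  set R : Set (ℕ → Bool) → Set (ℕ → Bool) := fun q =>
    if h : ∃ G, IsGδ G ∧ X ∩ G = q then h.choose else univ with hRdef
  have hRspec : ∀ q ∈ Q, IsGδ (R q) ∧ X ∩ R q = q := by
    intro q hq
    have hex : ∃ G, IsGδ G ∧ X ∩ G = q := h2 q hq.1 hq.2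
    have hEq : R q = hex.choose := dif_pos hex
    rw [hEq]
    exact ⟨hex.choose_spec.1, hex.choose_spec.2⟩
  obtain ⟨Q₁, hQ₁sub, hQ₁card, hcover⟩ := h1 Q (fun q hq => hq)
    (fun A hA hAX => ⟨A, ⟨hA, hAX⟩, subset_rfl⟩) R
    (fun q hq => ⟨(hRspec q hq).1, by
      have := (hRspec q hq).2
      intro x hx
      have hxX : x ∈ X := hq.2 hx
      rw [← this] at hx
      exact hx.2⟩)
  have hXq : X ⊆ ⋃ q ∈ Q₁, q := by
    intro x hx
    obtain ⟨q, hq, hxq⟩ := mem_iUnion₂.mp (hcover hx)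
    have hq' := hQ₁sub hq
    have : x ∈ X ∩ R q := ⟨hx, hxq⟩
    rw [(hRspec q hq').2] at this
    exact mem_iUnion₂.mpr ⟨q, hq, this⟩
  calc Cardinal.mk X ≤ Cardinal.mk (⋃ q ∈ Q₁, q) := Cardinal.mk_le_mk_of_subset hXq
    _ ≤ Cardinal.mk Q₁ * ⨆ q : Q₁, Cardinal.mk (q : Set (ℕ → Bool)) :=
        Cardinal.mk_biUnion_le _ _
    _ ≤ Cardinal.aleph 1 * Cardinal.aleph 1 := by
        apply mul_le_mul'
        · exact le_of_eq hQ₁card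
        · refine ciSup_le' fun q => ?_
          have hc : (q : Set (ℕ → Bool)).Countable := (hQ₁sub q.2).1
          exact le_trans (Cardinal.mk_le_aleph0_iff.mpr hc)
            (Cardinal.aleph0_le_aleph 1)
    _ = Cardinal.aleph 1 := Cardinal.mul_eq_self (Cardinal.aleph0_le_aleph 1)
end

section
/- Let X, Y be topological spaces and w = ⟨U_n × V_n : n ∈ ω⟩ a sequence of open boxes such that for every (x,y) ∈ X × Y the set {n : (x,y) ∈ U_n × V_n} is infinite. Then the smallest semifilter on ω containing all sets I((x,y)) = {n : (x,y) ∈ U_n × V_n} equals {A ∩ B : A ∈ F_u, B ∈ F_v}, where F_u and F_v are the smallest semifilters containing all sets {n : x ∈ U_n} (x ∈ X) and {n : y ∈ V_n} (y ∈ Y) respectively. -/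
open Set

/-- A semifilter on ω: a family of infinite subsets of ω closed under almost-supersets. -/
def IsSemifilter (F : Set (Set ℕ)) : Prop :=
  (∀ f ∈ F, f.Infinite) ∧ ∀ f ∈ F, ∀ X : Set ℕ, (f \ X).Finite → X ∈ F

/-- The smallest semifilter containing the family `A`. -/
def genSemifilter (A : Set (Set ℕ)) : Set (Set ℕ) :=
  ⋂₀ {F : Set (Set ℕ) | IsSemifilter F ∧ A ⊆ F}

lemma semifilter_up (A : Set (Set ℕ)) (hA : ∀ f ∈ A, f.Infinite) :
    IsSemifilter {S : Set ℕ | ∃ f ∈ A, (f \ S).Finite} := by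
  constructor
  · rintro S ⟨f, hf, hfS⟩
    exact ((hA f hf).diff hfS).mono (by intro n hn; by_contra h; exact hn.2 ⟨hn.1, h⟩)
  · rintro S ⟨f, hf, hfS⟩ T hST
    refine ⟨f, hf, (hfS.union hST).subset ?_⟩
    intro n hn
    by_cases h : n ∈ S <;> simp_all

lemma gen_eq (A : Set (Set ℕ)) (hA : ∀ f ∈ A, f.Infinite) :
    genSemifilter A = {S | ∃ f ∈ A, (f \ S).Finite} := by
  apply subset_antisymm
  · intro S hS
    exact hS _ ⟨semifilter_up A hA, fun f hf => ⟨f, hf, by simp⟩⟩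
  · rintro S ⟨f, hf, hfS⟩ F hF
    exact hF.1.2 f (hF.2 hf) S hfS

lemma gen_empty : genSemifilter ∅ = ∅ :=
  subset_antisymm (fun S hS => hS ∅ ⟨⟨fun f hf => hf.elim, fun f hf => hf.elim⟩,
    empty_subset _⟩) (empty_subset _)

theorem semifilter_of_product (X Y : Type*) [TopologicalSpace X] [TopologicalSpace Y]
    (U : ℕ → Set X) (V : ℕ → Set Y)
    (hU : ∀ n, IsOpen (U n)) (hV : ∀ n, IsOpen (V n))
    (hinf : ∀ x : X, ∀ y : Y, {n : ℕ | x ∈ U n ∧ y ∈ V n}.Infinite) :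
    genSemifilter {S : Set ℕ | ∃ x : X, ∃ y : Y, S = {n : ℕ | x ∈ U n ∧ y ∈ V n}} =
      {S : Set ℕ | ∃ A ∈ genSemifilter {T : Set ℕ | ∃ x : X, T = {n : ℕ | x ∈ U n}},
        ∃ B ∈ genSemifilter {T : Set ℕ | ∃ y : Y, T = {n : ℕ | y ∈ V n}},
          S = A ∩ B} := by
  rcases isEmpty_or_nonempty X with hX | hX
  · have h1 : {S : Set ℕ | ∃ x : X, ∃ y : Y, S = {n : ℕ | x ∈ U n ∧ y ∈ V n}} = ∅ := by
      ext S; simp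
    have h2 : {T : Set ℕ | ∃ x : X, T = {n : ℕ | x ∈ U n}} = ∅ := by
      ext T; simp
    rw [h1, h2, gen_empty]
    ext S; simp
  rcases isEmpty_or_nonempty Y with hY | hY
  · have h1 : {S : Set ℕ | ∃ x : X, ∃ y : Y, S = {n : ℕ | x ∈ U n ∧ y ∈ V n}} = ∅ := by
      ext S; simp
    have h2 : {T : Set ℕ | ∃ y : Y, T = {n : ℕ | y ∈ V n}} = ∅ := by
      ext T; simp
    rw [h1, h2, gen_empty]
    ext S; simp
  obtain ⟨x₀⟩ := hX
  obtain ⟨y₀⟩ := hY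
  have hAinf : ∀ f ∈ {S : Set ℕ | ∃ x : X, ∃ y : Y, S = {n : ℕ | x ∈ U n ∧ y ∈ V n}},
      f.Infinite := by
    rintro f ⟨x, y, rfl⟩; exact hinf x y
  have hUinf : ∀ f ∈ {T : Set ℕ | ∃ x : X, T = {n : ℕ | x ∈ U n}}, f.Infinite := by
    rintro f ⟨x, rfl⟩
    exact (hinf x y₀).mono (fun n hn => hn.1)
  have hVinf : ∀ f ∈ {T : Set ℕ | ∃ y : Y, T = {n : ℕ | y ∈ V n}}, f.Infinite := by
    rintro f ⟨y, rfl⟩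
    exact (hinf x₀ y).mono (fun n hn => hn.2)
  rw [gen_eq _ hAinf, gen_eq _ hUinf, gen_eq _ hVinf]
  ext S
  constructor
  · rintro ⟨f, ⟨x, y, rfl⟩, hfS⟩
    refine ⟨S ∪ ({n | x ∈ U n} \ {n | y ∈ V n}), ⟨{n | x ∈ U n}, ⟨x, rfl⟩, ?_⟩,
      S ∪ ({n | y ∈ V n} \ {n | x ∈ U n}), ⟨{n | y ∈ V n}, ⟨y, rfl⟩, ?_⟩, ?_⟩
    · refine hfS.subset ?_
      intro n hn
      simp only [mem_diff, mem_union, mem_setOf_eq] at *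
      push_neg at hn
      exact ⟨⟨hn.1, hn.2.2 hn.1⟩, hn.2.1⟩
    · refine hfS.subset ?_
      intro n hn
      simp only [mem_diff, mem_union, mem_setOf_eq] at *
      push_neg at hn
      exact ⟨⟨hn.2.2 hn.1, hn.1⟩, hn.2.1⟩
    · ext n
      simp only [mem_inter_iff, mem_union, mem_diff, mem_setOf_eq]
      tauto
  · rintro ⟨A, ⟨f, ⟨x, rfl⟩, hfA⟩, B, ⟨g, ⟨y, rfl⟩, hgB⟩, rfl⟩
    refine ⟨{n | x ∈ U n ∧ y ∈ V n}, ⟨x, y, rfl⟩, (hfA.union hgB).subset ?_⟩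
    intro n hn
    simp only [mem_diff, mem_inter_iff, mem_union, mem_setOf_eq] at *
    by_cases h : n ∈ A
    · exact Or.inr ⟨hn.1.2, fun hB => hn.2 ⟨h, hB⟩⟩
    · exact Or.inl ⟨hn.1.1, h⟩
end

section
/- The Sorgenfrey line is Lindelöf, but the square of the Sorgenfrey line is not Lindelöf. -/
open Set

/-- The Sorgenfrey topology on ℝ, generated by half-open intervals `[a, b)`. -/
def sorgenfreyTopology : TopologicalSpace ℝ :=
  TopologicalSpace.generateFrom {s : Set ℝ | ∃ a b : ℝ, s = Set.Ico a b}

lemma sorgenfrey_isOpen_Ico (a b : ℝ) : sorgenfreyTopology.IsOpen (Ico a b) :=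
  TopologicalSpace.GenerateOpen.basic _ ⟨a, b, rfl⟩

lemma sorgenfrey_exists_Ico {s : Set ℝ} (hs : sorgenfreyTopology.IsOpen s) :
    ∀ x ∈ s, ∃ y, x < y ∧ Ico x y ⊆ s := by
  induction hs with
  | basic u hu =>
    rintro x hx
    obtain ⟨a, b, rfl⟩ := hu
    exact ⟨b, hx.2, fun z hz => ⟨hx.1.trans hz.1, hz.2⟩⟩
  | univ => exact fun x _ => ⟨x + 1, by linarith, fun z _ => trivial⟩
  | inter u v _ _ ihu ihv =>
    rintro x ⟨hxu, hxv⟩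
    obtain ⟨y₁, hy₁, h₁⟩ := ihu x hxu
    obtain ⟨y₂, hy₂, h₂⟩ := ihv x hxv
    exact ⟨min y₁ y₂, lt_min hy₁ hy₂,
      fun z hz => ⟨h₁ ⟨hz.1, hz.2.trans_le (min_le_left _ _)⟩,
        h₂ ⟨hz.1, hz.2.trans_le (min_le_right _ _)⟩⟩⟩
  | sUnion S _ ih =>
    rintro x hx
    obtain ⟨t, htS, hxt⟩ := hx
    obtain ⟨y, hy, h⟩ := ih t htS x hxt
    exact ⟨y, hy, h.trans (subset_sUnion_of_mem htS)⟩

lemma sorgenfrey_lindelof : @LindelofSpace ℝ sorgenfreyTopology := by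
  refine @LindelofSpace.mk ℝ sorgenfreyTopology ?_
  rw [@isLindelof_iff_countable_subcover ℝ sorgenfreyTopology]
  intro ι U hUo hUc
  have hx : ∀ x : ℝ, ∃ i, x ∈ U i := fun x => mem_iUnion.1 (hUc (mem_univ x))
  choose i hi using hx
  have hbb : ∀ x : ℝ, ∃ y, x < y ∧ Ico x y ⊆ U (i x) :=
    fun x => sorgenfrey_exists_Ico (hUo (i x)) x (hi x)
  choose b hb hsub using hbb
  obtain ⟨c, hc, hcU⟩ := TopologicalSpace.isOpen_iUnion_countable
      (fun x : ℝ => Ioo x (b x)) (fun x => isOpen_Ioo)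
  set T : Set ℝ := ⋃ x, Ioo x (b x) with hT
  have hq : ∀ x ∈ Tᶜ, ∃ r : ℚ, x < (r : ℝ) ∧ (r : ℝ) < b x := fun x _ => exists_rat_btwn (hb x)
  choose! q hq1 hq2 using hq
  have key : ∀ x ∈ Tᶜ, ∀ y ∈ Tᶜ, q x = q y → x = y := by
    intro x hx y hy hxy
    have hx' : ∀ z, z < x → ¬ x < b z := by
      simpa [hT, compl_iUnion, mem_Ioo, not_and] using hx
    have hy' : ∀ z, z < y → ¬ y < b z := by
      simpa [hT, compl_iUnion, mem_Ioo, not_and] using hy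
    rcases lt_trichotomy x y with h | h | h
    · refine absurd ?_ (hy' x h)
      calc y < (q y : ℝ) := hq1 y hy
        _ = (q x : ℝ) := by rw [hxy]
        _ < b x := hq2 x hx
    · exact h
    · refine absurd ?_ (hx' y h)
      calc x < (q x : ℝ) := hq1 x hx
        _ = (q y : ℝ) := by rw [hxy]
        _ < b y := hq2 y hy
  have hTc : (Tᶜ : Set ℝ).Countable :=
    Set.countable_of_injective_of_countable_image (fun a ha b hb => key a ha b hb)
      (Set.to_countable _)
  refine ⟨i '' c ∪ i '' Tᶜ, (hc.image i).union (hTc.image i), fun x _ => ?_⟩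
  by_cases hxT : x ∈ T
  · rw [← hcU] at hxT
    obtain ⟨y, hyc, hy⟩ := mem_iUnion₂.1 hxT
    exact mem_iUnion₂.2 ⟨i y, Or.inl (mem_image_of_mem i hyc), hsub y ⟨hy.1.le, hy.2⟩⟩
  · exact mem_iUnion₂.2 ⟨i x, Or.inr (mem_image_of_mem i hxT), hsub x ⟨le_rfl, hb x⟩⟩

lemma sorgenfrey_prod_not_lindelof :
    ¬ @LindelofSpace (ℝ × ℝ)
      (@instTopologicalSpaceProd ℝ ℝ sorgenfreyTopology sorgenfreyTopology) := by
  intro h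
  letI : TopologicalSpace ℝ := sorgenfreyTopology
  set A : Set (ℝ × ℝ) := {p : ℝ × ℝ | p.1 + p.2 = 0} with hA
  have hIco : ∀ a b : ℝ, IsOpen (Ico a b) := sorgenfrey_isOpen_Ico
  have hAc : IsOpen Aᶜ := by
    rw [isOpen_prod_iff]
    intro x y hxy
    rcases lt_or_gt_of_ne (fun h0 : x + y = 0 => hxy h0) with hneg | hpos
    · refine ⟨Ico x (x + (-(x + y)) / 2), Ico y (y + (-(x + y)) / 2), hIco _ _, hIco _ _,
        ⟨le_rfl, by linarith⟩, ⟨le_rfl, by linarith⟩, ?_⟩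
      rintro ⟨a, b⟩ ⟨⟨ha1, ha2⟩, ⟨hb1, hb2⟩⟩
      simp only [hA, mem_compl_iff, mem_setOf_eq]
      intro hab
      simp only at ha1 ha2 hb1 hb2 hab
      linarith
    · refine ⟨Ico x (x + 1), Ico y (y + 1), hIco _ _, hIco _ _,
        ⟨le_rfl, by linarith⟩, ⟨le_rfl, by linarith⟩, ?_⟩
      rintro ⟨a, b⟩ ⟨⟨ha1, _⟩, ⟨hb1, _⟩⟩
      simp only [hA, mem_compl_iff, mem_setOf_eq]
      intro hab
      simp only at ha1 hb1 hab
      linarith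
  set U : Option ℝ → Set (ℝ × ℝ) := fun o =>
    Option.rec Aᶜ (fun x => Ico x (x + 1) ×ˢ Ico (-x) (-x + 1)) o with hU
  have hUo : ∀ o, IsOpen (U o) := by
    rintro (_ | x)
    · exact hAc
    · exact (hIco _ _).prod (hIco _ _)
  have hcov : (univ : Set (ℝ × ℝ)) ⊆ ⋃ o, U o := by
    rintro ⟨x, y⟩ -
    by_cases hxy : x + y = 0
    · refine mem_iUnion.2 ⟨some x, ⟨⟨le_rfl, by linarith⟩, ⟨by linarith, by linarith⟩⟩⟩
    · exact mem_iUnion.2 ⟨none, hxy⟩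
  obtain ⟨t, ht, hsub⟩ := h.isLindelof_univ.elim_countable_subcover U hUo hcov
  have hmem : ∀ x : ℝ, some x ∈ t := by
    intro x
    obtain ⟨o, hot, hxo⟩ := mem_iUnion₂.1 (hsub (mem_univ (x, -x)))
    match o with
    | none => exact absurd (by simp [hA] : (x, -x) ∈ A) hxo
    | some y =>
      obtain ⟨⟨h1, _⟩, ⟨h3, _⟩⟩ := hxo
      have : y = x := le_antisymm h1 (by simpa using h3)
      rwa [this] at hot
  have : (univ : Set ℝ).Countable := by
    have := ht.preimage (Option.some_injective ℝ)
    exact this.mono fun x _ => hmem x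
  exact Cardinal.not_countable_real this

theorem sorgenfrey_lindelof_not_square :
    @LindelofSpace ℝ sorgenfreyTopology ∧
      ¬ @LindelofSpace (ℝ × ℝ)
        (@instTopologicalSpaceProd ℝ ℝ sorgenfreyTopology sorgenfreyTopology) :=
  ⟨sorgenfrey_lindelof, sorgenfrey_prod_not_lindelof⟩
end
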